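/- arXiv:2005.04066 — 8 statements merged into one kernel-verified Lean document; each statement's English description precedes it below -/
import Mathlib

section
/- For all n ≥ 1, the Catalan number C_n is odd if and only if n+1 is a power of 2; equivalently, C_n ≡ 1 (mod 2) exactly when n = 2^k - 1 for some k ≥ 0. -/
open Finset

lemma mod2_cast (x : ℕ) : x % 2 = 1 ↔ (x : ZMod 2) = 1 := by
  have h2 : (2 : ZMod 2) = 0 := by decide
  have hx : (x : ZMod 2) = ((x % 2 : ℕ) : ZMod 2) := by
    conv_lhs => rw [← Nat.mod_add_div x 2]
    push_cast
    rw [h2]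
    ring
  rcases Nat.mod_two_eq_zero_or_one x with h0 | h1
  · rw [h0] at hx ⊢
    simp only [Nat.cast_zero] at hx
    rw [hx]
    simp
  · rw [h1] at hx ⊢
    simp only [Nat.cast_one] at hx
    rw [hx]
    simp

lemma sym_sum (f : ℕ → ZMod 2) (n : ℕ) :
    ∑ i ∈ range (n + 1), f i * f (n - i) =
      if n % 2 = 0 then f (n / 2) else 0 := by
  by_cases hpar : n % 2 = 0
  · simp only [hpar, if_true]
    have hmem : n / 2 ∈ range (n + 1) := by
      simp; omega
    rw [← Finset.add_sum_erase _ _ hmem]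
    have hhalf : n - n / 2 = n / 2 := by omega
    rw [hhalf]
    have hsq : f (n / 2) * f (n / 2) = f (n / 2) := by
      have : ∀ x : ZMod 2, x * x = x := by decide
      exact this _
    rw [hsq]
    have hzero : ∑ i ∈ (range (n + 1)).erase (n / 2), f i * f (n - i) = 0 := by
      apply Finset.sum_involution (g := fun i _ => n - i)
      · intro a ha
        have ha' : a ≤ n := by
          simp [Finset.mem_erase, Finset.mem_range] at ha; omega
        have : n - (n - a) = a := by omega
        rw [this, mul_comm]
        have : ∀ x : ZMod 2, x + x = 0 := by decide
        exact this _
      · intro a ha _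
        simp [Finset.mem_erase, Finset.mem_range] at ha
        omega
      · intro a ha
        simp only [Finset.mem_erase, Finset.mem_range] at ha ⊢
        omega
      · intro a ha
        have ha' : a ≤ n := by
          simp [Finset.mem_erase, Finset.mem_range] at ha; omega
        omega
    rw [hzero, add_zero]
  · simp only [hpar, if_false]
    apply Finset.sum_involution (g := fun i _ => n - i)
    · intro a ha
      have ha' : a ≤ n := by simp [Finset.mem_range] at ha; omega
      have : n - (n - a) = a := by omega
      rw [this, mul_comm]
      have : ∀ x : ZMod 2, x + x = 0 := by decide
      exact this _
    · intro a ha _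
      omega
    · intro a ha
      simp only [Finset.mem_range] at ha ⊢
      omega
    · intro a ha
      have ha' : a ≤ n := by simp [Finset.mem_range] at ha; omega
      omega

lemma catalan_succ_mod2 (n : ℕ) :
    ((catalan (n + 1) : ℕ) : ZMod 2) =
      if n % 2 = 0 then ((catalan (n / 2) : ℕ) : ZMod 2) else 0 := by
  rw [catalan_succ', Finset.Nat.sum_antidiagonal_eq_sum_range_succ_mk]
  push_cast
  exact sym_sum (fun i => ((catalan i : ℕ) : ZMod 2)) n

lemma catalan_odd_iff_aux : ∀ n : ℕ, catalan n % 2 = 1 ↔ ∃ k : ℕ, n + 1 = 2 ^ k := by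
  intro n
  induction n using Nat.strong_induction_on with
  | _ n ih =>
    match n with
    | 0 => simp [catalan_zero]; exact ⟨0, rfl⟩
    | m + 1 =>
      rw [mod2_cast, catalan_succ_mod2]
      by_cases hpar : m % 2 = 0
      · simp only [hpar, if_true]
        rw [← mod2_cast, ih (m / 2) (by omega)]
        constructor
        · rintro ⟨k, hk⟩
          exact ⟨k + 1, by rw [pow_succ]; omega⟩
        · rintro ⟨k, hk⟩
          match k with
          | 0 => omega
          | j + 1 =>
            rw [pow_succ] at hk
            exact ⟨j, by omega⟩
      · simp only [hpar, if_false]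
        constructor
        · intro h; exact absurd h.symm one_ne_zero
        · rintro ⟨k, hk⟩
          exfalso
          match k with
          | 0 => omega
          | j + 1 =>
            rw [pow_succ] at hk
            omega

theorem catalan_odd_iff (n : ℕ) (hn : 1 ≤ n) :
    catalan n % 2 = 1 ↔ ∃ k : ℕ, n + 1 = 2 ^ k := catalan_odd_iff_aux n
end

section
/- The Hankel transform of the Rueppel sequence is h_n = (-1)^{binomial(n+1,2)}, i.e. the determinant of the (n+1)×(n+1) matrix with entries r_{i+j} (0 ≤ i,j ≤ n) equals (-1)^{n(n+1)/2}. -/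
open Classical

/-- The Rueppel sequence: `r n = 1` iff `n + 1` is a power of `2`. -/

noncomputable def rueppel (n : ℕ) : ℤ := if ∃ k : ℕ, n + 1 = 2 ^ k then 1 else 0

lemma rueppel_eq_one {n k : ℕ} (h : n + 1 = 2 ^ k) : rueppel n = 1 := if_pos ⟨k, h⟩

lemma rueppel_eq_zero {n : ℕ} (h : ∀ k, n + 1 ≠ 2 ^ k) : rueppel n = 0 := by
  unfold rueppel
  rw [if_neg]
  push_neg
  exact h

lemma rueppel_zero_of_between {t x : ℕ} (h1 : 2 ^ t < x + 1) (h2 : x + 1 < 2 ^ (t + 1)) :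
    rueppel x = 0 := by
  apply rueppel_eq_zero
  intro k hk
  have h3 : t < k := by
    have : (2:ℕ) ^ t < 2 ^ k := by omega
    exact (Nat.pow_lt_pow_iff_right (by norm_num)).mp this
  have h4 : k < t + 1 := by
    have : (2:ℕ) ^ k < 2 ^ (t + 1) := by omega
    exact (Nat.pow_lt_pow_iff_right (by norm_num)).mp this
  omega

lemma sign_sumComm (b : ℕ) :
    Equiv.Perm.sign (Equiv.sumComm (Fin b) (Fin b)) = (-1 : ℤˣ) ^ b := by
  have hcomm : ∀ x : Fin b × Bool,
      ((Equiv.prodComm (Fin b) Bool).trans (Equiv.boolProdEquivSum (Fin b)))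
        ((Equiv.prodCongrRight fun _ : Fin b => Equiv.swap true false) x) =
      (Equiv.sumComm (Fin b) (Fin b))
        (((Equiv.prodComm (Fin b) Bool).trans (Equiv.boolProdEquivSum (Fin b))) x) := by
    rintro ⟨a, x⟩
    cases x <;> simp [Equiv.prodCongrRight, Equiv.swap_apply_def]
  have h := Equiv.Perm.sign_eq_sign_of_equiv
      (Equiv.prodCongrRight fun _ : Fin b => Equiv.swap true false)
      (Equiv.sumComm (Fin b) (Fin b))
      ((Equiv.prodComm (Fin b) Bool).trans (Equiv.boolProdEquivSum (Fin b))) hcomm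
  rw [← h, Equiv.Perm.sign_prodCongrRight]
  simp [Equiv.Perm.sign_swap]

lemma neg_one_pow_choose (a b : ℕ) :
    (-1 : ℤ) ^ ((a + 2 * b).choose 2) = (-1) ^ (a.choose 2) * (-1) ^ b := by
  induction b with
  | zero => simp
  | succ b ih =>
    have h2 : (a + 2 * (b + 1)).choose 2 =
        (a + 2 * b).choose 2 + (2 * (a + 2 * b) + 1) := by
      rw [show a + 2 * (b + 1) = (a + 2 * b) + 1 + 1 by ring,
          show ((a + 2 * b) + 1 + 1).choose 2 = ((a+2*b)+1).choose 1 + ((a+2*b)+1).choose 2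
            from Nat.choose_succ_succ _ 1,
          show ((a + 2 * b) + 1).choose 2 = (a+2*b).choose 1 + (a+2*b).choose 2
            from Nat.choose_succ_succ _ 1,
          Nat.choose_one_right, Nat.choose_one_right]
      ring
    rw [h2, pow_add, ih]
    have h3 : (-1 : ℤ) ^ (2 * (a + 2 * b) + 1) = -1 :=
      Odd.neg_one_pow ⟨a + 2 * b, by ring⟩
    rw [h3, pow_succ]
    ring

lemma key_hankel (m : ℕ) :
    Matrix.det (Matrix.of fun i j : Fin m => rueppel (i + j)) = (-1 : ℤ) ^ (m.choose 2) := by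
  induction m using Nat.strong_induction_on with
  | _ m IH =>
  by_cases hm0 : m = 0
  · subst hm0; simp [Matrix.det_fin_zero]
  by_cases hm1 : m = 1
  · subst hm1
    rw [Matrix.det_fin_one]
    simp only [Matrix.of_apply]
    rw [show ((0 : Fin 1) : ℕ) + ((0 : Fin 1) : ℕ) = 0 by simp,
        rueppel_eq_one (k := 0) (by norm_num)]
    simp
  have hm2 : 2 ≤ m := by omega
  set t := Nat.log 2 (m - 1) with ht
  have ht1 : 2 ^ t ≤ m - 1 := Nat.pow_log_le_self 2 (by omega)
  have ht2 : m - 1 < 2 ^ (t + 1) := Nat.lt_pow_succ_log_self (by norm_num) _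
  have hp1 : (2:ℕ) ^ (t + 1) = 2 * 2 ^ t := by rw [pow_succ]; ring
  have hp2 : (2:ℕ) ^ (t + 1 + 1) = 4 * 2 ^ t := by rw [pow_succ, pow_succ]; ring
  obtain ⟨a, b, hab, hmab, hb1, halt⟩ :
      ∃ a b : ℕ, a + b = 2 ^ t ∧ m = a + b + b ∧ 1 ≤ b ∧ a < m :=
    ⟨2 ^ (t+1) - m, m - 2 ^ t, by omega, by omega, by omega, by omega⟩
  -- the row-permuting involution
  have hinv : Function.Involutive (fun i : Fin m =>
      if h : (i : ℕ) < a then i else (⟨2 * 2 ^ t - 1 - (i : ℕ), by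
        have := i.isLt; omega⟩ : Fin m)) := by
    intro i
    by_cases h : (i : ℕ) < a
    · simp [h]
    · have hi := i.isLt
      have h2 : ¬ (2 * 2 ^ t - 1 - (i : ℕ) < a) := by omega
      simp only [dif_neg h, dif_neg h2]
      apply Fin.ext
      show 2 * 2 ^ t - 1 - (2 * 2 ^ t - 1 - (i : ℕ)) = (i : ℕ)
      omega
  set ρ : Equiv.Perm (Fin m) := Function.Involutive.toPerm _ hinv with hρdef
  have hρ : ∀ i : Fin m, ((ρ i : Fin m) : ℕ) =
      if (i : ℕ) < a then (i : ℕ) else 2 * 2 ^ t - 1 - (i : ℕ) := by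
    intro i
    rw [hρdef]
    by_cases h : (i : ℕ) < a
    · simp only [Function.Involutive.toPerm, Equiv.coe_fn_mk, dif_pos h, if_pos h]
    · simp only [Function.Involutive.toPerm, Equiv.coe_fn_mk, dif_neg h, if_neg h]
  set e : ((Fin a ⊕ Fin b) ⊕ Fin b) ≃ Fin m :=
    (Equiv.sumCongr finSumFinEquiv (Equiv.refl (Fin b))).trans
      (finSumFinEquiv.trans (finCongr (by omega))) with hedef
  have he1 : ∀ i : Fin a, ((e (Sum.inl (Sum.inl i))) : ℕ) = (i : ℕ) := by
    intro i; rw [hedef]; simp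
  have he2 : ∀ i : Fin b, ((e (Sum.inl (Sum.inr i))) : ℕ) = a + (i : ℕ) := by
    intro i; rw [hedef]; simp
  have he3 : ∀ i : Fin b, ((e (Sum.inr i)) : ℕ) = a + b + (i : ℕ) := by
    intro i; rw [hedef]; simp [add_assoc]
  set M : Matrix (Fin m) (Fin m) ℤ := Matrix.of fun i j : Fin m => rueppel (i + j) with hMdef
  -- values of ρ ∘ e
  have hv1 : ∀ i : Fin a, ((ρ (e (Sum.inl (Sum.inl i)))) : ℕ) = (i : ℕ) := by
    intro i
    rw [hρ, he1, if_pos i.isLt]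
  have hv2 : ∀ i : Fin b, ((ρ (e (Sum.inl (Sum.inr i)))) : ℕ) = 2 * 2 ^ t - 1 - (a + (i:ℕ)) := by
    intro i
    rw [hρ, he2, if_neg (by omega)]
  have hv3 : ∀ i : Fin b,
      ((ρ (e (Sum.inr i))) : ℕ) = 2 * 2 ^ t - 1 - (a + b + (i:ℕ)) := by
    intro i
    rw [hρ, he3, if_neg (by omega)]
  -- block structure
  set Q : Matrix (Fin a) (Fin b) ℤ :=
    Matrix.of fun i j => (M.submatrix ⇑ρ id) (e (Sum.inl (Sum.inl i))) (e (Sum.inl (Sum.inr j)))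
    with hQdef
  set Y : Matrix (Fin b) (Fin a ⊕ Fin b) ℤ :=
    Matrix.of fun i j => (M.submatrix ⇑ρ id) (e (Sum.inr i)) (e (Sum.inl j)) with hYdef
  have hblock : (M.submatrix ⇑ρ id).submatrix ⇑e ⇑e =
      Matrix.fromBlocks
        (Matrix.fromBlocks (Matrix.of fun i j : Fin a => rueppel (i + j)) Q 0 1) 0 Y 1 := by
    ext i j
    rcases i with (i | i) | i <;> rcases j with (j | j) | j
    · -- (C, C)
      simp only [Matrix.submatrix_apply, id_eq, hMdef, Matrix.of_apply,
        Matrix.fromBlocks_apply₁₁]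
      rw [hv1, he1]
    · -- (C, B) : Q
      rfl
    · -- (C, A) : 0
      have hi := i.isLt; have hj := j.isLt
      simp only [Matrix.submatrix_apply, id_eq, hMdef, Matrix.of_apply,
        Matrix.fromBlocks_apply₁₂, Matrix.zero_apply]
      rw [hv1, he3]
      exact rueppel_zero_of_between (t := t) (by omega) (by omega)
    · -- (B, C) : 0
      have hi := i.isLt; have hj := j.isLt
      simp only [Matrix.submatrix_apply, id_eq, hMdef, Matrix.of_apply,
        Matrix.fromBlocks_apply₁₁, Matrix.fromBlocks_apply₂₁, Matrix.zero_apply]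
      rw [hv2, he1]
      exact rueppel_zero_of_between (t := t) (by omega) (by omega)
    · -- (B, B) : 1
      have hi := i.isLt; have hj := j.isLt
      simp only [Matrix.submatrix_apply, id_eq, hMdef, Matrix.of_apply,
        Matrix.fromBlocks_apply₁₁, Matrix.fromBlocks_apply₂₂]
      rw [hv2, he2, Matrix.one_apply]
      by_cases hij : i = j
      · subst hij
        rw [if_pos rfl, show 2 * 2 ^ t - 1 - (a + (i:ℕ)) + (a + (i:ℕ)) = 2 * 2^t - 1 by omega]
        exact rueppel_eq_one (k := t + 1) (by omega)
      · rw [if_neg hij]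
        have hij' : (i : ℕ) ≠ (j : ℕ) := fun h => hij (Fin.ext h)
        rcases Nat.lt_or_ge (j : ℕ) (i : ℕ) with h | h
        · exact rueppel_zero_of_between (t := t) (by omega) (by omega)
        · exact rueppel_zero_of_between (t := t + 1) (by omega) (by omega)
    · -- (B, A) : 0
      have hi := i.isLt; have hj := j.isLt
      simp only [Matrix.submatrix_apply, id_eq, hMdef, Matrix.of_apply,
        Matrix.fromBlocks_apply₁₂, Matrix.zero_apply]
      rw [hv2, he3]
      exact rueppel_zero_of_between (t := t + 1) (by omega) (by omega)
    · -- (A, C) : Y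
      rfl
    · -- (A, B) : Y
      rfl
    · -- (A, A) : 1
      have hi := i.isLt; have hj := j.isLt
      simp only [Matrix.submatrix_apply, id_eq, hMdef, Matrix.of_apply,
        Matrix.fromBlocks_apply₂₂]
      rw [hv3, he3, Matrix.one_apply]
      by_cases hij : i = j
      · subst hij
        rw [if_pos rfl,
          show 2 * 2 ^ t - 1 - (a + b + (i:ℕ)) + (a + b + (i:ℕ)) = 2 * 2^t - 1 by omega]
        exact rueppel_eq_one (k := t + 1) (by omega)
      · rw [if_neg hij]
        have hij' : (i : ℕ) ≠ (j : ℕ) := fun h => hij (Fin.ext h)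
        rcases Nat.lt_or_ge (j : ℕ) (i : ℕ) with h | h
        · exact rueppel_zero_of_between (t := t) (by omega) (by omega)
        · exact rueppel_zero_of_between (t := t + 1) (by omega) (by omega)
  -- determinant of the permuted matrix
  have hdetN : (M.submatrix ⇑ρ id).det = (-1 : ℤ) ^ (a.choose 2) := by
    rw [← Matrix.det_submatrix_equiv_self e (M.submatrix ⇑ρ id), hblock,
      Matrix.det_fromBlocks_zero₁₂, Matrix.det_fromBlocks_zero₂₁, Matrix.det_one,
      IH a halt, mul_one, mul_one]
  -- sign of ρ
  have hsign : ((Equiv.Perm.sign ρ : ℤˣ) : ℤ) = (-1 : ℤ) ^ b := by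
    set π : Equiv.Perm (Fin a ⊕ (Fin b ⊕ Fin b)) :=
      (Equiv.refl (Fin a)).sumCongr (Equiv.sumComm (Fin b) (Fin b)) with hπdef
    set e₁ : (Fin a ⊕ (Fin b ⊕ Fin b)) ≃ Fin m :=
      ((Equiv.refl (Fin a)).sumCongr ((Equiv.refl (Fin b)).sumCongr Fin.revPerm)).trans
        ((Equiv.sumAssoc (Fin a) (Fin b) (Fin b)).symm.trans e) with he₁def
    have he₁1 : ∀ i : Fin a, ((e₁ (Sum.inl i)) : ℕ) = (i : ℕ) := by
      intro i; rw [he₁def]; simp [Equiv.sumAssoc, he1]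
    have he₁2 : ∀ x : Fin b, ((e₁ (Sum.inr (Sum.inl x))) : ℕ) = a + (x : ℕ) := by
      intro x; rw [he₁def]; simp [Equiv.sumAssoc, he2]
    have he₁3 : ∀ x : Fin b, ((e₁ (Sum.inr (Sum.inr x))) : ℕ) = a + b + (b - 1 - (x : ℕ)) := by
      intro x; rw [he₁def]
      simp [Equiv.sumAssoc, he3, Fin.rev]
      omega
    have hcomm : ∀ x, e₁ (π x) = ρ (e₁ x) := by
      rintro (i | (x | x))
      · show e₁ (Sum.inl i) = ρ (e₁ (Sum.inl i))
        apply Fin.ext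
        rw [hρ, he₁1, if_pos i.isLt]
      · show e₁ (Sum.inr (Sum.inr x)) = ρ (e₁ (Sum.inr (Sum.inl x)))
        apply Fin.ext
        rw [hρ, he₁3, he₁2, if_neg (by omega)]
        have := x.isLt
        omega
      · show e₁ (Sum.inr (Sum.inl x)) = ρ (e₁ (Sum.inr (Sum.inr x)))
        apply Fin.ext
        rw [hρ, he₁2, he₁3, if_neg (by omega)]
        have := x.isLt
        omega
    have hs := Equiv.Perm.sign_eq_sign_of_equiv π ρ e₁ hcomm
    rw [← hs, hπdef, Equiv.Perm.sign_sumCongr, Equiv.Perm.sign_refl, one_mul, sign_sumComm]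
    simp
  -- put everything together
  have h1 : (M.submatrix ⇑ρ id).det = (Equiv.Perm.sign ρ : ℤ) * M.det := Matrix.det_permute ρ M
  rw [hdetN, hsign] at h1
  have h2 : M.det = (-1 : ℤ) ^ b * (-1 : ℤ) ^ (a.choose 2) := by
    have hbb : (-1 : ℤ) ^ b * (-1 : ℤ) ^ b = 1 := by
      rw [← pow_add]
      exact Even.neg_one_pow ⟨b, rfl⟩
    calc M.det = ((-1:ℤ)^b * (-1:ℤ)^b) * M.det := by rw [hbb, one_mul]
      _ = (-1:ℤ)^b * ((-1:ℤ)^b * M.det) := by ring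
      _ = (-1:ℤ)^b * (-1:ℤ)^(a.choose 2) := by rw [← h1]
  have hexp : (-1 : ℤ) ^ (m.choose 2) = (-1 : ℤ) ^ (a.choose 2) * (-1 : ℤ) ^ b := by
    rw [show m.choose 2 = (a + 2 * b).choose 2 from congrArg (Nat.choose · 2) (by omega)]
    exact neg_one_pow_choose a b
  rw [h2, hexp]
  ring

/-- The Hankel transform of the Rueppel sequence is `(-1)^(n(n+1)/2)`. -/
theorem hankel_rueppel (n : ℕ) :
    Matrix.det (Matrix.of fun i j : Fin (n + 1) => rueppel (i + j)) =
      (-1 : ℤ) ^ (n * (n + 1) / 2) := by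
  rw [key_hankel (n + 1)]
  congr 1
  rw [Nat.choose_two_right]
  simp [Nat.mul_comm]
end

section
/- Let h_n = (-1)^{binomial(n+1,2)} and let h*_n be the Hankel transform of the shifted Rueppel sequence r_{n+1}. Then h*_0 = h_0, h*_{2n} = h*_{n-1} · h_n for n ≥ 1, and h*_{2n+1} = h*_n · h_n. -/
open Classical

/-- Hankel transform of the Rueppel sequence. -/
noncomputable def h (n : ℕ) : ℤ := (-1 : ℤ) ^ (n * (n + 1) / 2)

/-- Hankel transform of the shifted Rueppel sequence. -/
noncomputable def hstar (n : ℕ) : ℤ :=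
  Matrix.det (Matrix.of fun i j : Fin (n + 1) => rueppel (i + j + 1))

/-!
List the rows and columns of a Hankel matrix of the Rueppel sequence `r` with the even indices
first. Since `r (2t + 1) = r t` and `r (2t + 2) = 0`, the matrix `(r (i + j + 1))` of size
`p + q`, with `q ≤ p ≤ q + 1`, becomes block diagonal with blocks `(r (i + j))` of size `p` and
`(r (i + j + 1))` of size `q`. The matrix `(r (i + j))` of size `2m + 2` takes the form
`[[A, B], [B, 0]]` with `B = (r (i + j))` of size `m + 1`; in size `2m + 1`, the Schur complement
of the entry `r 0 = 1` has this form with `B = (r (i + j + 1))` of size `m`. Writing `H` and `S`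
for the two kinds of Hankel determinants, this gives `S (p + q) = H p * S q`,
`H (2m + 2) = ± H (m + 1) ^ 2` and `H (2m + 1) = ± S m ^ 2`, so by induction all of them are
`±1`, and then `H (n + 1) = h n` follows from the signs.
-/

open Matrix

theorem Matrix.det_fromBlocks_zero₂₂ {R ι : Type*} [CommRing R] [Fintype ι] [DecidableEq ι]
    (A B C : Matrix ι ι R) :
    (fromBlocks A B C 0).det = (-1) ^ Fintype.card ι * (B.det * C.det) := by
  have hswap : (fromBlocks 0 1 1 0 : Matrix (ι ⊕ ι) (ι ⊕ ι) R).det = (-1) ^ Fintype.card ι := by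
    have : (fromBlocks 0 1 1 0 : Matrix (ι ⊕ ι) (ι ⊕ ι) R) =
        fromBlocks 1 1 0 1 * fromBlocks 1 0 (-1) 1 * fromBlocks 1 1 0 1 *
          fromBlocks (-1) 0 0 1 := by
      simp [fromBlocks_multiply]
    rw [this, det_mul, det_mul, det_mul, det_fromBlocks_zero₂₁, det_fromBlocks_zero₁₂,
      det_fromBlocks_zero₂₁]
    simp [det_neg]
  calc (fromBlocks A B C 0).det = (fromBlocks B A 0 C * fromBlocks 0 1 1 0).det := by
        simp [fromBlocks_multiply]
    _ = (-1) ^ Fintype.card ι * (B.det * C.det) := by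
        rw [det_mul, det_fromBlocks_zero₂₁, hswap]; ring

noncomputable def finSumFinInterleave {p q : ℕ} (hqp : q ≤ p) (hpq : p ≤ q + 1) :
    Fin p ⊕ Fin q ≃ Fin (p + q) :=
  Equiv.ofBijective (Sum.elim (fun a => ⟨2 * a, by omega⟩) (fun b => ⟨2 * b + 1, by omega⟩)) <|
    (Fintype.bijective_iff_injective_and_card _).2
      ⟨by rintro (a | a) (b | b) h <;> simp [Fin.ext_iff] at h ⊢ <;> omega, by simp⟩

section
variable {p q : ℕ} (hqp : q ≤ p) (hpq : p ≤ q + 1)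

@[simp] lemma finSumFinInterleave_inl (a : Fin p) :
    (finSumFinInterleave hqp hpq (.inl a) : ℕ) = 2 * a := rfl

@[simp] lemma finSumFinInterleave_inr (b : Fin q) :
    (finSumFinInterleave hqp hpq (.inr b) : ℕ) = 2 * b + 1 := rfl

end

def Matrix.hankel {α : Type*} (a : ℕ → α) (n : ℕ) : Matrix (Fin n) (Fin n) α :=
  of fun i j => a (i + j)

@[simp] lemma Matrix.hankel_apply {α : Type*} (a : ℕ → α) (n : ℕ) (i j : Fin n) :
    hankel a n i j = a (i + j) := rfl

lemma hstar_eq_det_hankel (n : ℕ) :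
    hstar n = (hankel (fun k => rueppel (k + 1)) (n + 1)).det := rfl

lemma rueppel_zero : rueppel 0 = 1 := if_pos ⟨0, rfl⟩

lemma rueppel_odd {k t : ℕ} (h : k = 2 * t + 1) : rueppel k = rueppel t := by
  subst h
  unfold rueppel
  congr 1
  refine propext ⟨fun ⟨j, hj⟩ => ?_, fun ⟨j, hj⟩ => ⟨j + 1, by rw [pow_succ]; omega⟩⟩
  cases j with
  | zero => omega
  | succ j => exact ⟨j, by rw [pow_succ] at hj; omega⟩

lemma rueppel_eq_zero_of_two_dvd {k : ℕ} (h : 2 ∣ k) (hk : k ≠ 0) : rueppel k = 0 := by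
  refine if_neg fun ⟨j, hj⟩ => ?_
  cases j with
  | zero => omega
  | succ j => rw [pow_succ] at hj; omega

lemma det_hankel_rueppel_succ_add {p q : ℕ} (hqp : q ≤ p) (hpq : p ≤ q + 1) :
    (hankel (fun k => rueppel (k + 1)) (p + q)).det =
      (hankel rueppel p).det * (hankel (fun k => rueppel (k + 1)) q).det := by
  let e := finSumFinInterleave hqp hpq
  have hblocks : (hankel (fun k => rueppel (k + 1)) (p + q)).submatrix e e =
      fromBlocks (hankel rueppel p) 0 0 (hankel (fun k => rueppel (k + 1)) q) := by
    ext (i | i) (j | j) <;>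
      simp only [submatrix_apply, hankel_apply, e, finSumFinInterleave_inl,
        finSumFinInterleave_inr, fromBlocks_apply₁₁, fromBlocks_apply₁₂, fromBlocks_apply₂₁,
        fromBlocks_apply₂₂, Matrix.zero_apply] <;>
      first
      | exact rueppel_odd (by omega)
      | exact rueppel_eq_zero_of_two_dvd (by omega) (by omega)
  rw [← det_submatrix_equiv_self e, hblocks, det_fromBlocks_zero₁₂]

lemma det_hankel_rueppel_two_mul_add_two (m : ℕ) :
    (hankel rueppel (2 * m + 2)).det = (-1) ^ (m + 1) * (hankel rueppel (m + 1)).det ^ 2 := by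
  let e := finSumFinInterleave le_rfl (m + 1).le_succ
  have hblocks : (hankel rueppel ((m + 1) + (m + 1))).submatrix e e =
      fromBlocks (of fun i j : Fin (m + 1) => rueppel (2 * i + 2 * j)) (hankel rueppel (m + 1))
        (hankel rueppel (m + 1)) 0 := by
    ext (i | i) (j | j) <;>
      simp only [submatrix_apply, hankel_apply, e, finSumFinInterleave_inl,
        finSumFinInterleave_inr, fromBlocks_apply₁₁, fromBlocks_apply₁₂, fromBlocks_apply₂₁,
        fromBlocks_apply₂₂, Matrix.zero_apply, of_apply] <;>
      first
      | exact rueppel_odd (by omega)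
      | exact rueppel_eq_zero_of_two_dvd (by omega) (by omega)
  rw [show 2 * m + 2 = (m + 1) + (m + 1) by ring, ← det_submatrix_equiv_self e, hblocks,
    det_fromBlocks_zero₂₂, Fintype.card_fin, sq]

lemma det_hankel_rueppel_two_mul_add_one (m : ℕ) :
    (hankel rueppel (2 * m + 1)).det =
      (-1) ^ m * (hankel (fun k => rueppel (k + 1)) m).det ^ 2 := by
  let e : Fin 1 ⊕ (Fin m ⊕ Fin m) ≃ Fin (1 + (m + m)) :=
    (Equiv.sumCongr (.refl _) (finSumFinInterleave le_rfl m.le_succ)).trans finSumFinEquiv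
  let u : Fin m ⊕ Fin m → ℤ := Sum.elim (fun a => rueppel a) 0
  let S := hankel (fun k => rueppel (k + 1)) m
  have hblocks : (hankel rueppel (1 + (m + m))).submatrix e e =
      fromBlocks 1 (replicateRow (Fin 1) u) (replicateCol (Fin 1) u) (fromBlocks 0 S S 0) := by
    ext (i | i | i) (j | j | j) <;>
      simp only [e, u, S, Equiv.coe_trans, Fin.fin_one_eq_zero, submatrix_apply,
        Function.comp_apply, Equiv.sumCongr_apply, Equiv.coe_refl, Sum.map_inl, Sum.map_inr,
        finSumFinEquiv_apply_left, finSumFinEquiv_apply_right, hankel_apply, Fin.val_castAdd,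
        Fin.val_natAdd, Fin.val_zero, finSumFinInterleave_inl, finSumFinInterleave_inr,
        fromBlocks_apply₁₁, fromBlocks_apply₁₂, fromBlocks_apply₂₁, fromBlocks_apply₂₂,
        one_apply_eq, replicateRow_apply, replicateCol_apply, Sum.elim_inl, Sum.elim_inr,
        Pi.zero_apply, Matrix.zero_apply] <;>
      first
      | exact rueppel_zero
      | exact rueppel_odd (by omega)
      | exact rueppel_eq_zero_of_two_dvd (by omega) (by omega)
  have hschur : fromBlocks 0 S S 0 - replicateCol (Fin 1) u * replicateRow (Fin 1) u =
      fromBlocks (-vecMulVec (fun a : Fin m => rueppel a) (fun a : Fin m => rueppel a)) S S 0 := by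
    ext (i | i) (j | j) <;> simp [u, mul_apply, vecMulVec_apply]
  rw [show 2 * m + 1 = 1 + (m + m) by ring, ← det_submatrix_equiv_self e, hblocks,
    det_fromBlocks_one₁₁, hschur, det_fromBlocks_zero₂₂, Fintype.card_fin, sq]

lemma isUnit_det_hankel_rueppel (n : ℕ) :
    IsUnit (hankel rueppel n).det ∧ IsUnit (hankel (fun k => rueppel (k + 1)) n).det := by
  induction n using Nat.strong_induction_on with
  | _ n ih =>
  have hH : IsUnit (hankel rueppel n).det := by
    obtain ⟨m, rfl | rfl⟩ := n.even_or_odd'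
    · cases m with
      | zero => simp
      | succ m =>
        rw [show 2 * (m + 1) = 2 * m + 2 by ring, det_hankel_rueppel_two_mul_add_two]
        exact (isUnit_neg_one.pow _).mul ((ih (m + 1) (by omega)).1.pow 2)
    · rw [det_hankel_rueppel_two_mul_add_one]
      exact (isUnit_neg_one.pow _).mul ((ih m (by omega)).2.pow 2)
  refine ⟨hH, ?_⟩
  cases n with
  | zero => simp
  | succ n =>
    rw [show n + 1 = (n + 2) / 2 + (n + 1) / 2 by omega,
      det_hankel_rueppel_succ_add (by omega) (by omega)]
    refine IsUnit.mul ?_ (ih _ (by omega)).2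
    rcases (show (n + 2) / 2 ≤ n + 1 by omega).lt_or_eq with hlt | heq
    exacts [(ih _ hlt).1, heq ▸ hH]

lemma h_two_mul (m : ℕ) : h (2 * m) = (-1) ^ m := by
  rw [h, show 2 * m * (2 * m + 1) = 2 * (2 * (m * m) + m) by ring,
    Nat.mul_div_cancel_left _ two_pos, pow_add, pow_mul, neg_one_sq, one_pow, one_mul]

lemma h_two_mul_add_one (m : ℕ) : h (2 * m + 1) = (-1) ^ (m + 1) := by
  rw [h, show (2 * m + 1) * (2 * m + 1 + 1) = 2 * (2 * (m * (m + 1)) + (m + 1)) by ring,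
    Nat.mul_div_cancel_left _ two_pos, pow_add, pow_mul, neg_one_sq, one_pow, one_mul]

lemma det_hankel_rueppel_succ (n : ℕ) : (hankel rueppel (n + 1)).det = h n := by
  obtain ⟨m, rfl | rfl⟩ := n.even_or_odd'
  · rw [det_hankel_rueppel_two_mul_add_one, Int.isUnit_sq (isUnit_det_hankel_rueppel m).2,
      mul_one, h_two_mul]
  · rw [det_hankel_rueppel_two_mul_add_two, Int.isUnit_sq (isUnit_det_hankel_rueppel _).1,
      mul_one, h_two_mul_add_one]

theorem hankel_shifted_rueppel :
    hstar 0 = h 0 ∧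
    (∀ n : ℕ, 1 ≤ n → hstar (2 * n) = hstar (n - 1) * h n) ∧
    (∀ n : ℕ, hstar (2 * n + 1) = hstar n * h n) := by
  refine ⟨?_, fun n hn => ?_, fun n => ?_⟩
  · rw [hstar_eq_det_hankel, ← det_hankel_rueppel_succ]
    simp [rueppel_odd (show 1 = 2 * 0 + 1 from rfl)]
  · obtain ⟨k, rfl⟩ : ∃ k, n = k + 1 := ⟨n - 1, by omega⟩
    rw [hstar_eq_det_hankel, hstar_eq_det_hankel, Nat.add_sub_cancel,
      show 2 * (k + 1) + 1 = (k + 1 + 1) + (k + 1) by ring,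
      det_hankel_rueppel_succ_add (by omega) (by omega), det_hankel_rueppel_succ, mul_comm]
  · rw [hstar_eq_det_hankel, hstar_eq_det_hankel,
      show 2 * n + 1 + 1 = (n + 1) + (n + 1) by ring,
      det_hankel_rueppel_succ_add le_rfl (by omega), det_hankel_rueppel_succ, mul_comm]
end

section
/- For every n ≥ 0, (Σ_{k=0}^{n} binomial(2n, n+k)) mod 2 equals the augmented Rueppel sequence r⁺_n, which is 1 if n = 0 or n = 2^k for some k ≥ 0, and 0 otherwise. -/
/-!
Pairing `C(2n, n + k)` with `C(2n, n - k)` shows that twice the sum is `4 ^ n + C(2n, n)`. For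
`n ≥ 1` the sum is therefore odd exactly when `C(2n, n) ≡ 2 [MOD 4]`, i.e. when its `2`-adic
valuation is `1`. By Kummer's theorem that valuation is the number of carries in `n + n`, which is
the binary digit sum of `n`, and this is `1` exactly when `n` is a power of `2`.
-/

open Classical

/-- The augmented Rueppel sequence: `1` at `n = 0` and at powers of `2`. -/

noncomputable def rueppelAug (n : ℕ) : ℕ := if n = 0 ∨ ∃ k : ℕ, n = 2 ^ k then 1 else 0

open Finset

namespace Nat

theorem digits_sum_eq_zero_iff {b n : ℕ} : (b.digits n).sum = 0 ↔ n = 0 := by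
  refine ⟨fun h => ?_, fun h => by simp [h]⟩
  by_contra hn
  exact getLast_digit_ne_zero b hn <|
    List.sum_eq_zero_iff.mp h _ (List.getLast_mem (digits_ne_nil_iff_ne_zero.mpr hn))

theorem digits_sum_eq_one_iff {b n : ℕ} (hb : 1 < b) :
    (b.digits n).sum = 1 ↔ ∃ k, n = b ^ k := by
  refine ⟨fun h => ?_, ?_⟩
  · induction n using Nat.strong_induction_on with
    | _ n ih =>
      rcases n.eq_zero_or_pos with rfl | hn
      · simp at h
      rw [digits_def' hb hn, List.sum_cons] at h
      have hdiv := div_add_mod n b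
      obtain ⟨hmod, hsum⟩ | ⟨hmod, hsum⟩ :
          n % b = 1 ∧ (b.digits (n / b)).sum = 0 ∨ n % b = 0 ∧ (b.digits (n / b)).sum = 1 := by
        omega
      · rw [digits_sum_eq_zero_iff] at hsum
        exact ⟨0, by rw [← hdiv, hsum, hmod]; simp⟩
      · obtain ⟨k, hk⟩ := ih (n / b) (div_lt_self hn hb) hsum
        exact ⟨k + 1, by rw [← hdiv, hk, hmod, pow_succ']; simp⟩
  · rintro ⟨k, rfl⟩
    simpa [digits_of_lt b 1 one_ne_zero hb] using
      congrArg List.sum (digits_base_pow_mul (k := k) hb one_pos)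

theorem padicValNat_two_centralBinom (n : ℕ) :
    padicValNat 2 (centralBinom n) = (digits 2 n).sum := by
  rcases n.eq_zero_or_pos with rfl | hn
  · simp
  have kummer := sub_one_mul_padicValNat_choose_eq_sub_sum_digits' (p := 2) (n := n) (k := n)
  rw [← two_mul, ← centralBinom_eq_two_mul_choose, digits_base_mul one_lt_two hn] at kummer
  simpa using kummer

theorem two_mul_sum_range_choose_two_mul_add (n : ℕ) :
    2 * ∑ k ∈ range (n + 1), (2 * n).choose (n + k) = 4 ^ n + centralBinom n := by
  have hsymm :
      ∑ k ∈ range (n + 1), (2 * n).choose (n + k) = ∑ j ∈ range (n + 1), (2 * n).choose j := by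
    rw [← sum_range_reflect]
    refine sum_congr rfl fun k hk => choose_symm_of_eq_add ?_
    have := mem_range.mp hk
    omega
  have hrow : ∑ j ∈ range (2 * n + 1), (2 * n).choose j = 4 ^ n := by
    rw [sum_range_choose, pow_mul]; norm_num
  have hsplit := sum_range_add (fun j => (2 * n).choose j) (n + 1) n
  have hpeel := sum_range_succ' (fun k => (2 * n).choose (n + k)) n
  rw [show n + 1 + n = 2 * n + 1 by omega, hrow, ← hsymm] at hsplit
  simp only [add_zero, add_assoc, add_comm 1] at hsplit hpeel
  rw [centralBinom_eq_two_mul_choose]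
  omega

theorem sum_range_choose_two_mul_add_mod_two_eq_one_iff {n : ℕ} (hn : n ≠ 0) :
    (∑ k ∈ range (n + 1), (2 * n).choose (n + k)) % 2 = 1 ↔
      padicValNat 2 (centralBinom n) = 1 := by
  have h2S := two_mul_sum_range_choose_two_mul_add n
  have h4 : 4 ∣ 4 ^ n := dvd_pow_self 4 hn
  have hv : 1 ≤ padicValNat 2 (centralBinom n) := by
    rw [← padicValNat_dvd_iff_le (centralBinom_ne_zero n), pow_one]
    exact two_dvd_centralBinom_of_one_le (pos_of_ne_zero hn)
  have h4C : 4 ∣ centralBinom n ↔ 2 ≤ padicValNat 2 (centralBinom n) :=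
    padicValNat_dvd_iff_le (p := 2) (n := 2) (centralBinom_ne_zero n)
  omega

end Nat

theorem rueppel_horizontal_half (n : ℕ) :
    (∑ k ∈ Finset.range (n + 1), Nat.choose (2 * n) (n + k)) % 2 = rueppelAug n := by
  rcases eq_or_ne n 0 with rfl | hn
  · simp [rueppelAug]
  have hodd : (∑ k ∈ Finset.range (n + 1), Nat.choose (2 * n) (n + k)) % 2 = 1 ↔
      ∃ k : ℕ, n = 2 ^ k := by
    rw [Nat.sum_range_choose_two_mul_add_mod_two_eq_one_iff hn, Nat.padicValNat_two_centralBinom,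
      Nat.digits_sum_eq_one_iff one_lt_two]
  rw [rueppelAug, if_congr (or_iff_right hn) rfl rfl]
  split_ifs with h
  exacts [hodd.mpr h, Nat.mod_two_ne_one.mp (mt hodd.mp h)]
end

section
/- Let s_n = 1 + Σ_{k=0}^{n} j_k where j_0 = 0 and j_n = (-1/n) (the Jacobi symbol) for n ≥ 1. Then for every n ≥ 1, s_n equals 1 plus the number of runs (maximal blocks of equal digits) in the binary representation of n. -/
open Classical

/-- The Jacobi sequence: `j 0 = 0` and `j n = (-1/n)` (Jacobi symbol) for `n ≥ 1`. -/
def jac (n : ℕ) : ℤ := if n = 0 then 0 else jacobiSym (-1) n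

/-- `s n = 1 + Σ_{k=0}^n j k`. -/
def s (n : ℕ) : ℤ := 1 + ∑ k ∈ Finset.range (n + 1), jac k

/-- The number of runs (maximal blocks of equal digits) in the binary
representation of `n`, with `runs 0 = 0`. -/
noncomputable def binRuns (n : ℕ) : ℕ :=
  if n = 0 then 0
  else 1 + ((Finset.range (Nat.log2 n)).filter
    (fun i => n.testBit i ≠ n.testBit (i + 1))).card

/-!
Both sides telescope, so it suffices that `jac (n + 1) = binRuns (n + 1) - binRuns n`.
Appending a binary digit to `m` creates a new run exactly when it differs from the last
digit of `m`, whence `binRuns (2m) = binRuns m + m % 2` and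
`binRuns (2m + 1) = binRuns m + 1 - m % 2`. Together with `jac (2m) = jac m` and
`jac (2m + 1) = (-1) ^ m` this gives the increment identity by strong induction.
-/

theorem binRuns_of_two_le {n : ℕ} (hn : 2 ≤ n) :
    binRuns n = binRuns (n / 2) + if n % 2 = n / 2 % 2 then 0 else 1 := by
  have hlog : n.log2 = (n / 2).log2 + 1 := by rw [Nat.log2_def, if_pos hn]
  rw [binRuns, binRuns, if_neg (by omega), if_neg (by omega), hlog, Finset.card_filter,
    Finset.card_filter, Finset.sum_range_succ']
  simp only [Nat.testBit_succ, Nat.testBit_zero, zero_add]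
  rcases Nat.mod_two_eq_zero_or_one n with h | h <;>
    rcases Nat.mod_two_eq_zero_or_one (n / 2) with h' | h' <;> simp [h, h'] <;> omega

theorem binRuns_two_mul (m : ℕ) : binRuns (2 * m) = binRuns m + m % 2 := by
  rcases Nat.eq_zero_or_pos m with rfl | hm
  · simp [binRuns]
  · rw [binRuns_of_two_le (by omega)]
    rcases Nat.mod_two_eq_zero_or_one m with h | h <;> simp [h]

theorem binRuns_two_mul_add_one (m : ℕ) : binRuns (2 * m + 1) = binRuns m + (1 - m % 2) := by
  rcases Nat.eq_zero_or_pos m with rfl | hm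
  · simp [binRuns, Nat.log2_def]
  · rw [binRuns_of_two_le (by omega), show (2 * m + 1) / 2 = m by omega]
    rcases Nat.mod_two_eq_zero_or_one m with h | h <;> simp [h]

theorem jac_two_mul {m : ℕ} (hm : m ≠ 0) : jac (2 * m) = jac m := by
  rw [jac, if_neg (by omega), jac, if_neg hm, jacobiSym.mul_right' _ two_ne_zero hm,
    jacobiSym.mod_left]
  norm_num

theorem jac_two_mul_add_one (m : ℕ) : jac (2 * m + 1) = (-1) ^ m := by
  rw [jac, if_neg (by omega), jacobiSym.at_neg_one (odd_two_mul_add_one m),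
    ZMod.χ₄_eq_neg_one_pow (by omega)]
  norm_num [Nat.add_div]

theorem jac_succ_eq_binRuns_sub (n : ℕ) : jac (n + 1) = binRuns (n + 1) - binRuns n := by
  induction n using Nat.strong_induction_on with
  | _ n ih =>
  obtain ⟨m, rfl | rfl⟩ := Nat.even_or_odd' n
  · rw [jac_two_mul_add_one, binRuns_two_mul_add_one, binRuns_two_mul]
    rcases Nat.even_or_odd m with h | h
    · rw [h.neg_one_pow, Nat.even_iff.mp h]
      omega
    · rw [h.neg_one_pow, Nat.odd_iff.mp h]
      omega
  · have hdouble : 2 * m + 1 + 1 = 2 * (m + 1) := by ring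
    rw [hdouble, jac_two_mul m.succ_ne_zero, ih m (by omega), binRuns_two_mul, binRuns_two_mul_add_one]
    omega

theorem sum_range_succ_jac (n : ℕ) : ∑ k ∈ Finset.range (n + 1), jac k = binRuns n := by
  induction n with
  | zero => simp [jac, binRuns]
  | succ n ih => rw [Finset.sum_range_succ, ih, jac_succ_eq_binRuns_sub, add_sub_cancel]

theorem s_eq_one_add_runs_general (n : ℕ) : s n = 1 + (binRuns n : ℤ) := by
  rw [s, sum_range_succ_jac]

theorem s_eq_one_add_runs (n : ℕ) (hn : 1 ≤ n) : s n = 1 + (binRuns n : ℤ) :=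
  s_eq_one_add_runs_general n
end

section
/- Let a_0 < a_1 < a_2 < ⋯ enumerate in increasing order the natural numbers whose odd part is congruent to 1 modulo 4 (with a_0 = 0, taking the convention that 0 is included). Then a_n + s_{a_n} = 2n + 1 for all n, where s_m = 1 + Σ_{k=0}^{m} j_k and j_k is the Jacobi sequence (j_0 = 0, j_k = (-1/k) for k ≥ 1). -/
/-- The odd part of `n`: `n` divided by the largest power of `2` dividing `n`. -/
def oddPart (n : ℕ) : ℕ := n / 2 ^ (n.factorization 2)

/-!
Since `(-1/2) = 1`, multiplicativity gives `(-1/k) = (-1/oddPart k) = χ₄ (oddPart k)` for `k ≠ 0`,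
so `j_k = 1` on the nonzero members of the sequence and `j_k = -1` off it. Hence `s_m = 2 c_m - m - 1`,
where `c_m` counts the members `≤ m`, and `c_{a_n} = n + 1`.
-/

open Finset

lemma oddPart_odd {n : ℕ} (hn : n ≠ 0) : Odd (oddPart n) :=
  Nat.odd_iff.mpr (Nat.two_dvd_ne_zero.mp (Nat.not_dvd_ordCompl Nat.prime_two hn))

lemma jacobiSym_neg_one_two : jacobiSym (-1) 2 = 1 := by
  simp [jacobiSym, legendreSym]

lemma jacobiSym_neg_one_eq_oddPart (k : ℕ) : jacobiSym (-1) k = jacobiSym (-1) (oddPart k) := by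
  rcases eq_or_ne k 0 with rfl | hk
  · rfl
  have hne : oddPart k ≠ 0 := (oddPart_odd hk).pos.ne'
  have hsplit : 2 ^ k.factorization 2 * oddPart k = k := Nat.ordProj_mul_ordCompl_eq_self k 2
  conv_lhs => rw [← hsplit]
  rw [jacobiSym.mul_right' _ (pow_ne_zero _ two_ne_zero) hne, jacobiSym.pow_right,
    jacobiSym_neg_one_two, one_pow, one_mul]

lemma jac_of_ne_zero {k : ℕ} (hk : k ≠ 0) :
    jac k = if oddPart k % 4 = 1 then 1 else -1 := by
  have hodd := oddPart_odd hk
  rw [jac, if_neg hk, jacobiSym_neg_one_eq_oddPart, jacobiSym.at_neg_one hodd,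
    ZMod.χ₄_nat_eq_if_mod_four, if_neg (by rw [Nat.odd_iff.mp hodd]; decide)]

lemma s_eq_card (m : ℕ) :
    s m = 2 * #{k ∈ range (m + 1) | k = 0 ∨ oddPart k % 4 = 1} - m - 1 := by
  induction m with
  | zero => simp [s, jac, filter_singleton]
  | succ m ih =>
    have hs : s (m + 1) = s m + jac (m + 1) := by
      rw [s, s, sum_range_succ _ (m + 1)]; ring
    rw [hs, ih, range_add_one (n := m + 1), filter_insert, jac_of_ne_zero m.succ_ne_zero]
    by_cases h : oddPart (m + 1) % 4 = 1
    · rw [if_pos h, if_pos (Or.inr h), card_insert_of_notMem (by simp)]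
      push_cast; ring
    · rw [if_neg h, if_neg (by simp [h])]
      push_cast; ring

lemma StrictMono.card_filter_range_eq {a : ℕ → ℕ} (ha : StrictMono a) {p : ℕ → Prop}
    [DecidablePred p] (hrange : ∀ m, p m ↔ ∃ n, a n = m) (n : ℕ) :
    #{m ∈ range (a n + 1) | p m} = n + 1 := by
  have himage : {m ∈ range (a n + 1) | p m} = (range (n + 1)).image a := by
    ext m
    simp only [mem_filter, mem_range, mem_image, Nat.lt_succ_iff, hrange]
    constructor
    · rintro ⟨hle, k, rfl⟩
      exact ⟨k, ha.le_iff_le.mp hle, rfl⟩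
    · rintro ⟨k, hk, rfl⟩
      exact ⟨ha.monotone hk, k, rfl⟩
  rw [himage, card_image_of_injective _ ha.injective, card_range]

theorem a_add_s_a (a : ℕ → ℕ) (ha : StrictMono a)
    (hrange : ∀ m : ℕ, (m = 0 ∨ oddPart m % 4 = 1) ↔ ∃ n, a n = m) :
    ∀ n : ℕ, (a n : ℤ) + s (a n) = 2 * n + 1 := by
  intro n
  rw [s_eq_card, ha.card_filter_range_eq hrange]
  push_cast; ring
end

section
/- The number of compositions of n into parts that are powers of 2, taken modulo 2, equals the Rueppel sequence: comp(n) ≡ 1 (mod 2) if and only if n = 0 or n = 2^k - 1 for some k ≥ 1. -/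
/-- The number of compositions of `n` into powers of `2` (OEIS A023359). -/
noncomputable def compPow2 (n : ℕ) : ℕ :=
  Nat.card {l : List ℕ // (∀ x ∈ l, ∃ k : ℕ, x = 2 ^ k) ∧ l.sum = n}

/-!
Splitting off the first part gives `comp m = ∑_{p + q = m, p a power of 2} comp q` for `m ≥ 1`.
Reducing mod 2 and inducting, the right-hand side for `m = n + 1` becomes the number of ordered
pairs of powers of two with sum `n + 2`. Swapping the pair is an involution, so mod 2 only the
diagonal pair `(p, p)` survives, and it exists exactly when `n + 2` is a power of two.
-/

open Finset Function

theorem CharTwo.sum_eq_sum_filter_fixed {ι R : Type*} [Semiring R] [CharP R 2] [DecidableEq ι]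
    {s : Finset ι} (g : ι → ι) (hg : ∀ a ∈ s, g a ∈ s) (hgg : ∀ a ∈ s, g (g a) = a)
    {f : ι → R} (hf : ∀ a ∈ s, f (g a) = f a) :
    ∑ a ∈ s, f a = ∑ a ∈ s with g a = a, f a := by
  have hmoved : ∑ a ∈ s with g a ≠ a, f a = 0 := by
    refine sum_involution (fun a _ => g a) (fun a ha => ?_) (fun a ha _ => (mem_filter.1 ha).2)
      (fun a ha => ?_) (fun a ha => hgg a (mem_filter.1 ha).1)
    · rw [hf a (mem_filter.1 ha).1, CharTwo.add_self_eq_zero]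
    · obtain ⟨has, hne⟩ := mem_filter.1 ha
      exact mem_filter.2 ⟨hg a has, by rw [hgg a has]; exact Ne.symm hne⟩
  rw [← sum_filter_add_sum_filter_not s (fun a => g a = a) f, hmoved, add_zero]

theorem CharTwo.sum_antidiagonal_of_swap {R : Type*} [Semiring R] [CharP R 2] (N : ℕ)
    {f : ℕ × ℕ → R} (hf : ∀ x, f x.swap = f x) :
    ∑ x ∈ antidiagonal N, f x = if Even N then f (N / 2, N / 2) else 0 := by
  rw [CharTwo.sum_eq_sum_filter_fixed Prod.swap
    (fun x => HasAntidiagonal.swap_mem_antidiagonal.2) (fun x _ => x.swap_swap) (fun x _ => hf x)]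
  split_ifs with hN
  · obtain ⟨m, rfl⟩ := hN
    convert sum_singleton f (m, m) using 2
    · ext ⟨p, q⟩
      simp only [mem_filter, HasAntidiagonal.mem_antidiagonal, Prod.swap_prod_mk, Prod.mk.injEq,
        mem_singleton]
      omega
    · rw [Prod.mk.injEq]
      omega
  · refine sum_eq_zero fun ⟨p, q⟩ hx => absurd ⟨p, ?_⟩ hN
    simp only [mem_filter, HasAntidiagonal.mem_antidiagonal, Prod.swap_prod_mk,
      Prod.mk.injEq] at hx
    omega

theorem Nat.isPowerOfTwo_iff_even_and_div_two {N : ℕ} (hN : N ≠ 1) :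
    N.isPowerOfTwo ↔ Even N ∧ (N / 2).isPowerOfTwo := by
  constructor
  · rintro ⟨_ | k, rfl⟩
    · exact absurd rfl hN
    · exact ⟨⟨2 ^ k, by ring⟩, k, by rw [pow_succ, Nat.mul_div_cancel _ two_pos]⟩
  · rintro ⟨hN, k, hk⟩
    exact ⟨k + 1, by rw [pow_succ, ← hk, Nat.div_two_mul_two_of_even hN]⟩

abbrev Pow2Composition (n : ℕ) : Type :=
  {l : List ℕ // (∀ x ∈ l, ∃ k : ℕ, x = 2 ^ k) ∧ l.sum = n}

namespace Pow2Composition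

theorem eq_nil (l : Pow2Composition 0) : l.1 = [] := by
  refine List.eq_nil_iff_forall_not_mem.2 fun x hx => ?_
  obtain ⟨k, rfl⟩ := l.2.1 x hx
  exact pow_ne_zero k two_ne_zero (List.sum_eq_zero_iff.1 l.2.2 _ hx)

/-- A composition of `n` is a first part `x.1`, a power of two, followed by a composition of
the remainder `x.2`. -/
def cons (n : ℕ) :
    (Σ x : {x ∈ antidiagonal n | x.1.isPowerOfTwo}, Pow2Composition x.1.2) → Pow2Composition n :=
  fun s => ⟨s.1.1.1 :: s.2.1, List.forall_mem_cons.2 ⟨(mem_filter.1 s.1.2).2, s.2.2.1⟩, by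
    rw [List.sum_cons, s.2.2.2]
    exact HasAntidiagonal.mem_antidiagonal.1 (mem_filter.1 s.1.2).1⟩

theorem cons_bijective (n : ℕ) : Bijective (cons (n + 1)) := by
  constructor
  · rintro ⟨⟨⟨p, q⟩, hx⟩, t, ht, htq⟩ ⟨⟨⟨p', q'⟩, hx'⟩, t', ht', htq'⟩ h
    simp only [cons, Subtype.mk.injEq, List.cons.injEq] at h
    obtain ⟨rfl, rfl⟩ := h
    obtain rfl : q = q' := htq.symm.trans htq'
    rfl
  · rintro ⟨_ | ⟨p, t⟩, hl, hsum⟩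
    · simp at hsum
    · refine ⟨⟨⟨(p, t.sum), ?_⟩, t, fun x hx => hl x (by simp [hx]), rfl⟩, rfl⟩
      simp only [mem_filter, HasAntidiagonal.mem_antidiagonal]
      exact ⟨by simpa using hsum, hl p (by simp)⟩

end Pow2Composition

theorem compPow2_zero : compPow2 0 = 1 :=
  Nat.card_eq_one_iff_exists.2
    ⟨⟨[], by simp⟩, fun l => Subtype.ext (Pow2Composition.eq_nil l)⟩

instance (n : ℕ) : Finite (Pow2Composition n) := by
  induction n using Nat.strong_induction_on with
  | _ n ih =>
    cases n with
    | zero =>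
      have : compPow2 0 ≠ 0 := by simp [compPow2_zero]
      exact Nat.finite_of_card_ne_zero this
    | succ n =>
      have (x : {x ∈ antidiagonal (n + 1) | x.1.isPowerOfTwo}) :
          Finite (Pow2Composition x.1.2) := by
        obtain ⟨⟨p, q⟩, hx⟩ := x
        simp only [mem_filter, HasAntidiagonal.mem_antidiagonal] at hx
        have := Nat.pos_of_isPowerOfTwo hx.2
        exact ih q (by omega)
      exact Finite.of_surjective _ (Pow2Composition.cons_bijective n).2

theorem compPow2_succ (n : ℕ) :
    compPow2 (n + 1) = ∑ x ∈ antidiagonal (n + 1) with x.1.isPowerOfTwo, compPow2 x.2 := by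
  rw [compPow2, ← Nat.card_eq_of_bijective _ (Pow2Composition.cons_bijective n), Nat.card_sigma]
  exact sum_coe_sort _ fun x : ℕ × ℕ => compPow2 x.2

theorem compPow2_cast_zmod_two (n : ℕ) :
    (compPow2 n : ZMod 2) = if (n + 1).isPowerOfTwo then 1 else 0 := by
  induction n using Nat.strong_induction_on with
  | _ n ih =>
    cases n with
    | zero => rw [compPow2_zero, if_pos ⟨0, rfl⟩, Nat.cast_one]
    | succ n =>
      calc (compPow2 (n + 1) : ZMod 2)
          = ∑ x ∈ antidiagonal (n + 1),
              if x.1.isPowerOfTwo ∧ (x.2 + 1).isPowerOfTwo then 1 else 0 := by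
            rw [compPow2_succ, Nat.cast_sum, sum_filter]
            refine sum_congr rfl fun x hx => ?_
            by_cases hp : x.1.isPowerOfTwo
            · have := Nat.pos_of_isPowerOfTwo hp
              rw [HasAntidiagonal.mem_antidiagonal] at hx
              simpa only [hp, true_and, if_true] using ih x.2 (by omega)
            · simp only [hp, false_and, if_false]
        _ = ∑ x ∈ antidiagonal (n + 2),
              if x.1.isPowerOfTwo ∧ x.2.isPowerOfTwo then 1 else 0 := by
            have h0 : ¬Nat.isPowerOfTwo 0 := fun h => (Nat.pos_of_isPowerOfTwo h).ne rfl
            rw [Nat.sum_antidiagonal_succ' (n := n + 1)]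
            simp only [h0, and_false, if_false, zero_add]
        _ = if (n + 2).isPowerOfTwo then 1 else 0 := by
            rw [CharTwo.sum_antidiagonal_of_swap _ fun x => by simp only [Prod.fst_swap,
              Prod.snd_swap, and_comm]]
            simp only [Nat.isPowerOfTwo_iff_even_and_div_two (show n + 2 ≠ 1 by omega), and_self,
              ite_and]

theorem compPow2_odd_iff (n : ℕ) :
    compPow2 n % 2 = 1 ↔ n = 0 ∨ ∃ k : ℕ, 1 ≤ k ∧ n = 2 ^ k - 1 := by
  rw [← Nat.odd_iff, ← ZMod.natCast_eq_one_iff_odd, compPow2_cast_zmod_two]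
  simp only [ite_eq_left_iff, zero_ne_one, imp_false, not_not]
  constructor
  · rintro ⟨_ | k, hk⟩
    · exact Or.inl (by simpa using hk)
    · exact Or.inr ⟨k + 1, k.succ_pos, by omega⟩
  · rintro (rfl | ⟨k, -, rfl⟩)
    · exact ⟨0, rfl⟩
    · exact ⟨k, by have := k.one_le_two_pow; omega⟩
end

section
/- Define the parity-of-runs-of-ones sequence b by b_0 = 0, b_{2n} = b_n for n ≥ 1, b_{4n+1} = 1 - b_{2n} (i.e., for even argument m = 2n, b_{2m+1} = 1 - b_m), and b_{4n+3} = b_{2n+1} (for odd m, b_{2m+1} = b_m). Then b_n equals the parity of the number of runs of 1's in the binary representation of n. -/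
open Classical

/-- The number of runs of `1`'s (maximal blocks of consecutive `1` digits) in the
binary representation of `n`. -/
noncomputable def onesRuns (n : ℕ) : ℕ :=
  ((Finset.range (n + 1)).filter (fun i => n.testBit i ∧ ¬ n.testBit (i + 1))).card

/-!
Count each run of `1`'s at its most significant digit. Dropping the lowest binary digit of `n`
loses exactly the run counted at digit `0`, which exists iff `n ≡ 1 [MOD 4]`. Hence
`n ↦ onesRuns n % 2` satisfies the same recursion as `b`, and that recursion determines `b` by
strong induction.
-/

open Finset

structure IsRunsParityRec (b : ℕ → ℕ) : Prop where
  zero : b 0 = 0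
  two_mul : ∀ n : ℕ, 1 ≤ n → b (2 * n) = b n
  four_mul_add_one : ∀ n : ℕ, b (4 * n + 1) = 1 - b (2 * n)
  four_mul_add_three : ∀ n : ℕ, b (4 * n + 3) = b (2 * n + 1)

theorem IsRunsParityRec.unique {b c : ℕ → ℕ} (hb : IsRunsParityRec b)
    (hc : IsRunsParityRec c) : b = c := by
  funext n
  induction n using Nat.strong_induction_on with
  | _ n ih =>
  obtain ⟨k, rfl | rfl | rfl | rfl⟩ :
      ∃ k, n = 4 * k ∨ n = 4 * k + 1 ∨ n = 4 * k + 2 ∨ n = 4 * k + 3 := ⟨n / 4, by omega⟩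
  · rcases Nat.eq_zero_or_pos k with rfl | hk
    · rw [mul_zero, hb.zero, hc.zero]
    · rw [show 4 * k = 2 * (2 * k) by ring, hb.two_mul _ (by omega), hc.two_mul _ (by omega),
        ih _ (by omega)]
  · rw [hb.four_mul_add_one, hc.four_mul_add_one, ih _ (by omega)]
  · rw [show 4 * k + 2 = 2 * (2 * k + 1) by ring, hb.two_mul _ (by omega),
      hc.two_mul _ (by omega), ih _ (by omega)]
  · rw [hb.four_mul_add_three, hc.four_mul_add_three, ih _ (by omega)]

theorem onesRuns_eq_sum_range {n K : ℕ} (h : n ≤ K) :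
    onesRuns n = ∑ i ∈ range K, if n.testBit i ∧ ¬ n.testBit (i + 1) then 1 else 0 := by
  rw [onesRuns, card_filter, ← sum_filter, ← sum_filter]
  congr 1
  ext i
  simp only [mem_filter, mem_range, and_congr_left_iff, and_imp]
  intro hi _
  have : i < n := (Nat.lt_two_pow_self).trans_le (Nat.ge_two_pow_of_testBit hi)
  omega

theorem onesRuns_eq_onesRuns_div_two_add (n : ℕ) :
    onesRuns n = onesRuns (n / 2) + if n % 4 = 1 then 1 else 0 := by
  rw [onesRuns_eq_sum_range (Nat.le_succ n), sum_range_succ',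
    onesRuns_eq_sum_range (Nat.div_le_self n 2)]
  congr 1
  · exact sum_congr rfl fun i _ => by rw [Nat.testBit_succ n i, Nat.testBit_succ n (i + 1)]
  · simp only [zero_add, Nat.testBit_succ, Nat.testBit_zero, decide_eq_true_eq]
    split_ifs <;> omega

theorem onesRuns_two_mul (n : ℕ) : onesRuns (2 * n) = onesRuns n := by
  rw [onesRuns_eq_onesRuns_div_two_add, if_neg (by omega), Nat.mul_div_cancel_left n two_pos,
    add_zero]

theorem onesRuns_four_mul_add_one (n : ℕ) : onesRuns (4 * n + 1) = onesRuns (2 * n) + 1 := by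
  rw [onesRuns_eq_onesRuns_div_two_add, if_pos (by omega), show (4 * n + 1) / 2 = 2 * n by omega]

theorem onesRuns_four_mul_add_three (n : ℕ) :
    onesRuns (4 * n + 3) = onesRuns (2 * n + 1) := by
  rw [onesRuns_eq_onesRuns_div_two_add, if_neg (by omega),
    show (4 * n + 3) / 2 = 2 * n + 1 by omega, add_zero]

theorem isRunsParityRec_onesRuns_mod_two : IsRunsParityRec (fun n => onesRuns n % 2) where
  zero := by rw [onesRuns_eq_sum_range le_rfl, range_zero, sum_empty, Nat.zero_mod]
  two_mul n _ := by rw [onesRuns_two_mul]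
  four_mul_add_one n := by rw [onesRuns_four_mul_add_one]; omega
  four_mul_add_three n := by rw [onesRuns_four_mul_add_three]

theorem parity_of_runs_of_ones (b : ℕ → ℕ) (h0 : b 0 = 0)
    (heven : ∀ n : ℕ, 1 ≤ n → b (2 * n) = b n)
    (hodd1 : ∀ n : ℕ, b (4 * n + 1) = 1 - b (2 * n))
    (hodd2 : ∀ n : ℕ, b (4 * n + 3) = b (2 * n + 1)) :
    ∀ n : ℕ, b n = onesRuns n % 2 :=
  congrFun (IsRunsParityRec.unique ⟨h0, heven, hodd1, hodd2⟩ isRunsParityRec_onesRuns_mod_two)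
end
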